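/- Let f ≥ 1 be an integer and q = 2^f. Suppose ε ∈ {1, −1} is such that q + ε is a prime power with exactly one prime divisor (i.e., |π(q+ε)| = 1) and q − ε has exactly 2 or 3 distinct prime divisors. Then one of the following holds: (a) ε = −1, f is prime, q − 1 is a Mersenne prime, and q + 1 has 2 or 3 distinct prime divisors; (b) ε = 1, f = 4, q − 1 = 3·5 and q + 1 = 17; (c) ε = 1, f = 8, q − 1 = 3·5·17 and q + 1 = 257. -/

import Mathlib

/-!
If `2 ^ f - 1 = p ^ k` or `2 ^ f + 1 = p ^ k` with `k` odd, then `p ^ k ∓ 1 = (p ∓ 1) * c` where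
`c` is a geometric sum of `k` odd terms; so `c` is odd, positive and divides a power of two,
hence `c = 1` and `k = 1`. For even `k`, `p ^ k + 1 ≡ 2 [MOD 4]` rules out `2 ^ f - 1`, and
`(p ^ (k / 2) - 1) (p ^ (k / 2) + 1) = 2 ^ f` forces `2 ^ f + 1 = 9`, where `q - 1 = 7` is prime.
So `q + ε` is prime: for `ε = -1` a Mersenne prime, for `ε = 1` a Fermat prime, whence
`f = 2 ^ m`. For `m ≥ 4`, `2 ^ 16 - 1 = 3 * 5 * 17 * 257` divides `q - 1`, which then has at least
four prime factors, while `m ≤ 1` leaves too few.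
-/

open Finset

lemma Int.odd_geom_sum {x : ℤ} {k : ℕ} (hx : Odd x) (hk : Odd k) :
    Odd (∑ i ∈ Finset.range k, x ^ i) := by
  rw [Int.odd_iff, sum_int_mod, sum_congr rfl fun i _ => Int.odd_iff.mp (hx.pow (n := i))]
  simpa using Int.odd_iff.mp (hk.natCast (R := ℤ))

lemma Int.pow_eq_self_of_pow_sub_one_dvd_two_pow {x : ℤ} {k f : ℕ} (hx : Odd x) (hk : Odd k)
    (h : x ^ k - 1 ∣ 2 ^ f) : x ^ k = x := by
  set c := ∑ i ∈ Finset.range k, x ^ i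
  have hc : c * (x - 1) = x ^ k - 1 := geom_sum_mul x k
  have hc_dvd : c.natAbs ∣ 2 ^ f := by
    simpa [Int.natAbs_pow] using Int.natAbs_dvd_natAbs.mpr ((Dvd.intro _ hc).trans h)
  have hc_one : c.natAbs = 1 :=
    ((Int.natAbs_odd.mpr (odd_geom_sum hx hk)).coprime_two_right.pow_right f).eq_one_of_dvd hc_dvd
  have hc_pos : 0 < c := hk.geom_sum_pos
  have : c = 1 := by omega
  rw [this, one_mul] at hc
  linarith

lemma Nat.eq_three_of_sq_eq_two_pow_add_one {m f : ℕ} (h : m ^ 2 = 2 ^ f + 1) : f = 3 := by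
  obtain ⟨n, rfl⟩ : ∃ n, m = n + 2 := by
    refine ⟨m - 2, (Nat.sub_add_cancel ?_).symm⟩
    by_contra! hm
    interval_cases m <;> simp at h
  have hprod : (n + 1) * (n + 3) = 2 ^ f := by linarith
  obtain ⟨a, -, ha⟩ := (Nat.dvd_prime_pow Nat.prime_two).mp (Dvd.intro _ hprod)
  obtain ⟨b, -, hb⟩ := (Nat.dvd_prime_pow Nat.prime_two).mp (Dvd.intro_left _ hprod)
  have hn : n = 1 := by
    have h4 (e : ℕ) (he : 2 ≤ e) : 4 ∣ 2 ^ e := Nat.pow_dvd_pow 2 he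
    rcases a with _ | _ | a
    · rcases b with _ | b <;> simp [pow_succ] at hb; omega
    · simpa using ha
    · have := h4 (a + 2) (by omega)
      have := h4 b (by by_contra! hb2; interval_cases b <;> simp at hb)
      omega
  subst hn
  exact Nat.pow_right_injective le_rfl (by simpa using h.symm)

lemma Nat.eq_one_of_pow_add_one_eq_two_pow {p k f : ℕ} (hp : 2 ≤ p) (hf : 2 ≤ f)
    (h : p ^ k + 1 = 2 ^ f) : k = 1 := by
  have hk : k ≠ 0 := by
    rintro rfl
    rw [pow_zero] at h
    have : 2 ^ 2 ≤ 2 ^ f := Nat.pow_le_pow_right two_pos hf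
    omega
  have hZ : (p : ℤ) ^ k + 1 = 2 ^ f := by exact_mod_cast h
  have h4 : (4 : ℤ) ∣ 2 ^ f := pow_dvd_pow 2 hf
  have hp_odd : Odd (p : ℤ) := by
    rw [← Int.odd_pow' hk, ← Int.not_even_iff_odd, ← Int.even_add_one, hZ]
    exact (Int.even_pow' (by omega)).mpr even_two
  rcases Nat.even_or_odd k with ⟨j, rfl⟩ | hk_odd
  · have := Int.sq_mod_four_eq_one_of_odd (hp_odd.pow (n := j))
    rw [← pow_mul, mul_two] at this
    omega
  · have hdvd : (-(p : ℤ)) ^ k - 1 ∣ 2 ^ f := ⟨-1, by rw [hk_odd.neg_pow]; linear_combination -hZ⟩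
    have := Int.pow_eq_self_of_pow_sub_one_dvd_two_pow hp_odd.neg hk_odd hdvd
    rw [hk_odd.neg_pow, neg_inj] at this
    exact Nat.pow_right_injective hp (by simpa using (by exact_mod_cast this : p ^ k = p))

lemma Nat.eq_one_or_eq_three_of_pow_eq_two_pow_add_one {p k f : ℕ} (hp : 2 ≤ p) (hf : f ≠ 0)
    (h : p ^ k = 2 ^ f + 1) : k = 1 ∨ f = 3 := by
  rcases Nat.even_or_odd k with ⟨j, rfl⟩ | hk_odd
  · exact Or.inr (eq_three_of_sq_eq_two_pow_add_one (m := p ^ j) (by rw [← pow_mul, mul_two, h]))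
  · have hZ : (p : ℤ) ^ k - 1 = 2 ^ f := by rw [sub_eq_iff_eq_add]; exact_mod_cast h
    have hp_odd : Odd (p : ℤ) := by
      rw [← Int.odd_pow' hk_odd.pos.ne', ← sub_add_cancel ((p : ℤ) ^ k) 1, hZ]
      exact ((Int.even_pow' hf).mpr even_two).add_one
    have := Int.pow_eq_self_of_pow_sub_one_dvd_two_pow hp_odd hk_odd hZ.dvd
    exact Or.inl (Nat.pow_right_injective hp (by simpa using (by exact_mod_cast this : p ^ k = p)))

lemma Nat.prime_two_pow_sub_one_of_card_primeFactors_eq_one {f : ℕ}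
    (h : (2 ^ f - 1).primeFactors.card = 1) : (2 ^ f - 1).Prime := by
  obtain ⟨p, k, hp, -, hpk⟩ :=
    (isPrimePow_nat_iff _).mp (isPrimePow_iff_card_primeFactors_eq_one.mpr h)
  have hf : 2 ≤ f := by
    by_contra! hf
    interval_cases f <;> simp at h
  have hpk' : p ^ k + 1 = 2 ^ f := by have := f.one_le_two_pow; omega
  have hk := eq_one_of_pow_add_one_eq_two_pow hp.two_le hf hpk'
  rwa [← hpk, hk, pow_one]

lemma Nat.prime_two_pow_add_one_or_eq_three_of_card_primeFactors_eq_one {f : ℕ} (hf : f ≠ 0)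
    (h : (2 ^ f + 1).primeFactors.card = 1) : (2 ^ f + 1).Prime ∨ f = 3 := by
  obtain ⟨p, k, hp, -, hpk⟩ :=
    (isPrimePow_nat_iff _).mp (isPrimePow_iff_card_primeFactors_eq_one.mpr h)
  refine (eq_one_or_eq_three_of_pow_eq_two_pow_add_one hp.two_le hf hpk).imp_left fun hk => ?_
  rwa [← hpk, hk, pow_one]

lemma Nat.four_le_card_primeFactors_two_pow_sub_one {f : ℕ} (hf : f ≠ 0) (h16 : 16 ∣ f) :
    4 ≤ (2 ^ f - 1).primeFactors.card := by
  have hsub : (2 ^ 16 - 1).primeFactors ⊆ (2 ^ f - 1).primeFactors :=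
    primeFactors_mono (pow_sub_one_dvd_pow_sub_one 2 h16)
      (by have := Nat.one_lt_two_pow hf; omega)
  have h65535 : (2 ^ 16 - 1).primeFactors = {3, 5, 17, 257} := by simp [Nat.primeFactors]
  rw [h65535] at hsub
  exact card_le_card hsub

lemma Nat.eq_four_or_eq_eight_of_prime_two_pow_add_one {f : ℕ} (hprime : (2 ^ f + 1).Prime)
    (h : (2 ^ f - 1).primeFactors.card = 2 ∨ (2 ^ f - 1).primeFactors.card = 3) :
    f = 4 ∨ f = 8 := by
  have hf : f ≠ 0 := by rintro rfl; simp at h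
  obtain ⟨m, rfl⟩ := pow_of_pow_add_prime one_lt_two hf hprime
  have hm : m < 4 := by
    by_contra! hm
    have := four_le_card_primeFactors_two_pow_sub_one hf (pow_dvd_pow 2 hm)
    omega
  interval_cases m <;> simp_all [Nat.primeFactors]

/-- Let `q = 2 ^ f` with `f ≥ 1` and `ε = ±1`. If `q + ε` has exactly one prime divisor and
`q - ε` has exactly `2` or `3` distinct prime divisors, then one of three cases holds. -/
theorem stmt_1 (f : ℕ) (hf : 1 ≤ f) (ε : ℤ) (hε : ε = 1 ∨ ε = -1)
    (h1 : (((2 : ℤ) ^ f + ε).natAbs).primeFactors.card = 1)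
    (h2 : (((2 : ℤ) ^ f - ε).natAbs).primeFactors.card = 2 ∨
          (((2 : ℤ) ^ f - ε).natAbs).primeFactors.card = 3) :
    (ε = -1 ∧ f.Prime ∧ (2 ^ f - 1).Prime ∧
      ((2 ^ f + 1).primeFactors.card = 2 ∨ (2 ^ f + 1).primeFactors.card = 3)) ∨
    (ε = 1 ∧ f = 4 ∧ 2 ^ f - 1 = 3 * 5 ∧ 2 ^ f + 1 = 17) ∨
    (ε = 1 ∧ f = 8 ∧ 2 ^ f - 1 = 3 * 5 * 17 ∧ 2 ^ f + 1 = 257) := by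
  have h_add : ((2 : ℤ) ^ f + 1).natAbs = 2 ^ f + 1 := by
    exact_mod_cast Int.natAbs_natCast (2 ^ f + 1)
  have h_sub : ((2 : ℤ) ^ f - 1).natAbs = 2 ^ f - 1 := by
    rw [← Nat.cast_ofNat, ← Nat.cast_pow, ← Nat.cast_one, ← Nat.cast_sub f.one_le_two_pow,
      Int.natAbs_natCast]
  rcases hε with rfl | rfl
  · rw [h_add] at h1
    rw [h_sub] at h2
    rcases Nat.prime_two_pow_add_one_or_eq_three_of_card_primeFactors_eq_one (by omega) h1 with
      hprime | rfl
    · rcases Nat.eq_four_or_eq_eight_of_prime_two_pow_add_one hprime h2 with rfl | rfl <;> simp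
    · norm_num at h2
  · rw [← sub_eq_add_neg, h_sub] at h1
    rw [sub_neg_eq_add, h_add] at h2
    have hprime := Nat.prime_two_pow_sub_one_of_card_primeFactors_eq_one h1
    have hf1 : f ≠ 1 := by rintro rfl; norm_num at hprime
    exact Or.inl ⟨rfl, (Nat.prime_of_pow_sub_one_prime hf1 hprime).2, hprime, h2⟩
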